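/- If α_f < α_g, α_h > 0, and α_g - α_h - α_f < 0, then the function N ↦ (p·c_g·N^{α_g}) / (s·c_f·N^{α_f} + (p·c_g/c_h)·N^{α_g - α_h}) tends to infinity as N → ∞, and it is asymptotically equivalent to (p·c_g/(s·c_f))·N^{α_g - α_f}. -/

import Mathlib

/-! The term `(p * cg / ch) * N ^ (αg - αh)` is negligible against `s * cf * N ^ αf`, because
`αg - αh < αf`; hence the quotient is asymptotically equivalent to
`p * cg * N ^ αg / (s * cf * N ^ αf) = (p * cg / (s * cf)) * N ^ (αg - αf)`, which tends to
infinity since `αf < αg`. -/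

open Filter Asymptotics

lemma isLittleO_rpow_rpow_atTop_of_lt {a b : ℝ} (hab : a < b) :
    (fun x : ℝ => x ^ a) =o[atTop] fun x => x ^ b := by
  refine (isLittleO_iff_tendsto' ?_).2 ?_
  · filter_upwards [eventually_gt_atTop 0] with x hx hxb
    exact absurd hxb (Real.rpow_pos_of_pos hx b).ne'
  · refine (tendsto_rpow_neg_atTop (sub_pos.2 hab)).congr' ?_
    filter_upwards [eventually_gt_atTop 0] with x hx
    rw [neg_sub, Real.rpow_sub hx]

lemma isEquivalent_mul_rpow_add_mul_rpow {B D γ δ : ℝ} (hB : B ≠ 0) (hδγ : δ < γ) :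
    (fun x : ℝ => B * x ^ γ + D * x ^ δ) ~[atTop] fun x => B * x ^ γ :=
  IsEquivalent.refl.add_isLittleO
    (((isLittleO_rpow_rpow_atTop_of_lt hδγ).const_mul_left D).const_mul_right hB)

lemma isEquivalent_mul_rpow_div_mul_rpow_add_mul_rpow {A B D β γ δ : ℝ} (hB : B ≠ 0)
    (hδγ : δ < γ) :
    (fun x : ℝ => A * x ^ β / (B * x ^ γ + D * x ^ δ)) ~[atTop] fun x => A / B * x ^ (β - γ) := by
  refine (IsEquivalent.refl.div (isEquivalent_mul_rpow_add_mul_rpow hB hδγ)).congr_right ?_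
  filter_upwards [eventually_gt_atTop 0] with x hx
  have hxγ : x ^ γ ≠ 0 := (Real.rpow_pos_of_pos hx γ).ne'
  simp only [Pi.div_apply]
  rw [Real.rpow_sub hx]
  field_simp

theorem speedup_parallel_infty_theta_gf_general (s p cf cg ch αf αg αh : ℝ)
    (hs : 0 < s) (hp : 0 < p) (hcf : 0 < cf) (hcg : 0 < cg)
    (hfg : αf < αg) (hsign : αg - αh - αf < 0) :
    Filter.Tendsto
      (fun N : ℝ => (p * cg * N ^ αg) / (s * cf * N ^ αf + (p * cg / ch) * N ^ (αg - αh)))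
      Filter.atTop Filter.atTop ∧
    Filter.Tendsto
      (fun N : ℝ =>
        ((p * cg * N ^ αg) / (s * cf * N ^ αf + (p * cg / ch) * N ^ (αg - αh))) /
          ((p * cg / (s * cf)) * N ^ (αg - αf)))
      Filter.atTop (nhds 1) := by
  have hequiv := isEquivalent_mul_rpow_div_mul_rpow_add_mul_rpow (A := p * cg) (D := p * cg / ch)
    (β := αg) (mul_pos hs hcf).ne' (show αg - αh < αf by linarith)
  refine ⟨hequiv.symm.tendsto_atTop ?_, (isEquivalent_iff_tendsto_one ?_).1 hequiv⟩
  · exact (tendsto_rpow_atTop (sub_pos.2 hfg)).const_mul_atTop (by positivity)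
  · filter_upwards [eventually_gt_atTop 0] with N hN
    have := Real.rpow_pos_of_pos hN (αg - αf)
    positivity

theorem speedup_parallel_infty_theta_gf (s p cf cg ch αf αg αh : ℝ)
    (hs : 0 < s) (hp : 0 < p) (hcf : 0 < cf) (hcg : 0 < cg) (hch : 0 < ch)
    (hαf : 0 ≤ αf) (hαg : 0 ≤ αg) (hαh : 0 < αh)
    (hfg : αf < αg) (hsign : αg - αh - αf < 0) :
    Filter.Tendsto
      (fun N : ℝ => (p * cg * N ^ αg) / (s * cf * N ^ αf + (p * cg / ch) * N ^ (αg - αh)))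
      Filter.atTop Filter.atTop ∧
    Filter.Tendsto
      (fun N : ℝ =>
        ((p * cg * N ^ αg) / (s * cf * N ^ αf + (p * cg / ch) * N ^ (αg - αh))) /
          ((p * cg / (s * cf)) * N ^ (αg - αf)))
      Filter.atTop (nhds 1) :=
  speedup_parallel_infty_theta_gf_general s p cf cg ch αf αg αh hs hp hcf hcg hfg hsign
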